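/- arXiv:2508.09735 — 2 statements merged into one kernel-verified Lean document; each statement's English description precedes it below -/
import Mathlib

section
/- In the two-path instance with parameters k, μ, β (where k ≥ 1, μ ≥ 1, β ≥ 1 are integers and μ divides β), there exists a feasible assignment serving all β/μ + β·k requests: each request (s,d,μ) is routed along the bottom path of length k+1 and each unit request (u,v,1) is routed along its single edge, and no edge carries more than β bits in total. -/
/-- A QKD request: source vertex, destination vertex, and number of bits. -/
structure Req (V : Type) where
  src : V
  dst : V
  bits : ℕ

/-- `Walk src tgt u w p` : the list of edges `p` forms a valid directed walk
from `u` to `w` (the source of the first edge is `u`, the target of each edge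
is the source of the next one, and the target of the last edge is `w`). -/
inductive Walk {V E : Type} (src tgt : E → V) : V → V → List E → Prop where
  | nil (v : V) : Walk src tgt v v []
  | cons {u w : V} (e : E) {p : List E} (he : src e = u)
      (hp : Walk src tgt (tgt e) w p) : Walk src tgt u w (e :: p)

/-- A simple valid directed path from `s` to `d`: a walk whose visited
vertices are pairwise distinct. -/
def IsSimplePath {V E : Type} (src tgt : E → V) (s d : V) (p : List E) : Prop :=
  Walk src tgt s d p ∧ (s :: p.map tgt).Nodup

/-- The number of bits of the `i`-th request (0 if there is no such request). -/
def BitsAt {V : Type} (reqs : List (Req V)) (i : ℕ) : ℕ :=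
  (reqs[i]?.map Req.bits).getD 0

/-- Total bits routed through edge `e` by the requests strictly before step `t`
under the assignment `A`. -/
def UsedBefore {V E : Type} [DecidableEq E] (reqs : List (Req V))
    (A : ℕ → Option (List E)) (t : ℕ) (e : E) : ℕ :=
  ∑ i ∈ Finset.range t, if e ∈ (A i).getD [] then BitsAt reqs i else 0

/-- The path `p` is available at step `t` for `n` bits: every edge of `p`
has residual capacity at least `n` at step `t`. -/
def AvailAt {V E : Type} [DecidableEq E] (cap : E → ℕ) (reqs : List (Req V))
    (A : ℕ → Option (List E)) (t n : ℕ) (p : List E) : Prop :=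
  ∀ e ∈ p, UsedBefore reqs A t e + n ≤ cap e

/-- Number of requests served (i.e. not rejected) by the assignment `A`. -/
def Served {V E : Type} (reqs : List (Req V)) (A : ℕ → Option (List E)) : ℕ :=
  ((Finset.range reqs.length).filter (fun i => (A i).isSome)).card

/-- `A` is a greedy shortest-available-path run on the request sequence `reqs`:
processing the requests in order, each request `(s,d,n)` is assigned a path of
minimum length among the simple valid paths from `s` to `d` all of whose edges
have residual capacity at least `n`, and is rejected only if no such path
exists. -/
def IsGreedyShortestRun {V E : Type} [DecidableEq E] (src tgt : E → V) (cap : E → ℕ)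
    (reqs : List (Req V)) (A : ℕ → Option (List E)) : Prop :=
  (∀ i r, reqs[i]? = some r →
      (∀ p, A i = some p →
        IsSimplePath src tgt r.src r.dst p ∧ AvailAt cap reqs A i r.bits p ∧
        ∀ q, IsSimplePath src tgt r.src r.dst q → AvailAt cap reqs A i r.bits q →
          p.length ≤ q.length) ∧
      (A i = none → ∀ q, IsSimplePath src tgt r.src r.dst q →
        ¬ AvailAt cap reqs A i r.bits q)) ∧
  (∀ i, reqs[i]? = none → A i = none)

/-! ### The two-path instance
Vertices are natural numbers: `s = 0`, `d = 1`, the top internal vertices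
`a₁,…,a_{k-1}` are `2,…,k`, the bottom internal vertices `b₁,…,b_k` are
`k+1,…,2k`.  The edge type is `Fin (2*k+1)`: edges `0,…,k-1` form the top path
`s → a₁ → ⋯ → a_{k-1} → d` of `k` edges and edges `k,…,2k` form the
vertex-disjoint bottom path `s → b₁ → ⋯ → b_k → d` of `k+1` edges.
Every edge has capacity `β`. -/

/-- The `i`-th vertex of the top path (`i = 0,…,k`). -/
def tpVertTop (k i : ℕ) : ℕ := if i = 0 then 0 else if i = k then 1 else i + 1

/-- The `j`-th vertex of the bottom path (`j = 0,…,k+1`). -/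
def tpVertBot (k j : ℕ) : ℕ := if j = 0 then 0 else if j = k + 1 then 1 else k + j

/-- Source of each edge of the two-path instance. -/
def tpSrc (k : ℕ) (e : Fin (2 * k + 1)) : ℕ :=
  if e.val < k then tpVertTop k e.val else tpVertBot k (e.val - k)

/-- Target of each edge of the two-path instance. -/
def tpTgt (k : ℕ) (e : Fin (2 * k + 1)) : ℕ :=
  if e.val < k then tpVertTop k (e.val + 1) else tpVertBot k (e.val - k + 1)

/-- The top path (the `k` edges `0,…,k-1`, in order). -/
def topPath (k : ℕ) : List (Fin (2 * k + 1)) := (List.finRange (2 * k + 1)).take k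

/-- The request sequence of the two-path instance: `β/μ` copies of `(s,d,μ)`
followed by, for each edge `(u,v)` of the top path taken in order, `β` copies
of the unit request `(u,v,1)`. -/
def tpReqs (k μ β : ℕ) : List (Req ℕ) :=
  List.replicate (β / μ) ⟨0, 1, μ⟩ ++
    (topPath k).flatMap (fun e => List.replicate β ⟨tpSrc k e, tpTgt k e, 1⟩)

/-- The bottom path (the `k+1` edges `k,…,2k`, in order). -/
def botPath (k : ℕ) : List (Fin (2 * k + 1)) := (List.finRange (2 * k + 1)).drop k

/-! ### Auxiliary lemmas -/

section Aux

lemma walk_chain {V E : Type} (src tgt : E → V) (f : ℕ → V) :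
    ∀ (p : List E) (i : ℕ),
      (∀ j (hj : j < p.length), src (p[j]) = f (i + j) ∧ tgt (p[j]) = f (i + j + 1)) →
      Walk src tgt (f i) (f (i + p.length)) p := by
  intro p
  induction p with
  | nil =>
    intro i _
    simpa using Walk.nil (f i)
  | cons e q ih =>
    intro i h
    have h0 := h 0 (by simp)
    simp only [List.getElem_cons_zero] at h0
    have hq := ih (i + 1) (fun j hj => by
      have hj' : j + 1 < (e :: q).length := by simpa using Nat.succ_lt_succ hj
      have := h (j + 1) hj'
      simp only [List.getElem_cons_succ] at this
      constructor
      · rw [this.1]; congr 1; omega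
      · rw [this.2]; congr 1; omega)
    refine Walk.cons e (by simpa using h0.1) ?_
    rw [show tgt e = f (i + 1) by simpa using h0.2]
    have hlen : i + 1 + q.length = i + (e :: q).length := by simp; omega
    rw [hlen] at hq
    exact hq

lemma topPath_length (k : ℕ) : (topPath k).length = k := by
  simp [topPath]; omega

lemma topPath_getElem (k j : ℕ) (hj : j < k) :
    (topPath k)[j]'(by rw [topPath_length]; exact hj) = ⟨j, by omega⟩ := by
  apply Fin.ext
  simp [topPath, List.getElem_take]

lemma botPath_length (k : ℕ) : (botPath k).length = k + 1 := by
  simp [botPath]; omega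

lemma botPath_getElem (k j : ℕ) (hj : j < k + 1) :
    (botPath k)[j]'(by rw [botPath_length]; exact hj) = ⟨k + j, by omega⟩ := by
  apply Fin.ext
  simp [botPath, List.getElem_drop]

lemma mem_botPath {k : ℕ} {e : Fin (2 * k + 1)} : e ∈ botPath k ↔ k ≤ e.val := by
  constructor
  · intro h
    obtain ⟨j, hj, rfl⟩ := List.mem_iff_getElem.mp h
    rw [botPath_length] at hj
    rw [botPath_getElem k j hj]
    simp
  · intro h
    rw [List.mem_iff_getElem]
    refine ⟨e.val - k, by rw [botPath_length]; omega, ?_⟩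
    rw [botPath_getElem k (e.val - k) (by omega)]
    apply Fin.ext
    simp; omega

lemma tpVertBot_inj {k : ℕ} (hk : 1 ≤ k) : Function.Injective (tpVertBot k) := by
  intro a b hab
  unfold tpVertBot at hab
  split_ifs at hab <;> omega

lemma tpVertTop_inj {k : ℕ} (hk : 1 ≤ k) : Function.Injective (tpVertTop k) := by
  intro a b hab
  unfold tpVertTop at hab
  split_ifs at hab <;> omega

lemma botPath_simple (k : ℕ) (hk : 1 ≤ k) :
    IsSimplePath (tpSrc k) (tpTgt k) 0 1 (botPath k) := by
  have hsrc : ∀ j (hj : j < k + 1),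
      tpSrc k ((botPath k)[j]'(by rw [botPath_length]; exact hj)) = tpVertBot k j := by
    intro j hj
    rw [botPath_getElem k j hj]
    unfold tpSrc
    rw [if_neg (by simp)]
    congr 1
    simp
  have htgt : ∀ j (hj : j < k + 1),
      tpTgt k ((botPath k)[j]'(by rw [botPath_length]; exact hj)) = tpVertBot k (j + 1) := by
    intro j hj
    rw [botPath_getElem k j hj]
    unfold tpTgt
    rw [if_neg (by simp)]
    congr 1
    simp
  constructor
  · have hw := walk_chain (tpSrc k) (tpTgt k) (tpVertBot k) (botPath k) 0 (by
      intro j hj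
      rw [botPath_length] at hj
      exact ⟨by rw [hsrc j hj]; congr 1; omega, by rw [htgt j hj]; congr 1; omega⟩)
    rw [botPath_length] at hw
    have h0 : tpVertBot k 0 = 0 := by simp [tpVertBot]
    have h1 : tpVertBot k (0 + (k + 1)) = 1 := by simp [tpVertBot]
    rw [h0, h1] at hw
    exact hw
  · have heq : (0 : ℕ) :: (botPath k).map (tpTgt k) =
        (List.range (k + 2)).map (tpVertBot k) := by
      apply List.ext_getElem
      · simp [botPath_length]
      · intro n h1 h2
        match n with
        | 0 => simp [tpVertBot]
        | n + 1 =>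
          simp only [List.length_cons, List.length_map, botPath_length] at h1
          have hn : n < k + 1 := by omega
          have hb : n < (botPath k).length := by rw [botPath_length]; exact hn
          simp only [List.getElem_cons_succ, List.getElem_map, List.getElem_range]
          exact htgt n hn
    rw [heq]
    exact List.nodup_range.map (tpVertBot_inj hk)

lemma single_simple (k : ℕ) (hk : 1 ≤ k) (e : Fin (2 * k + 1)) (he : e.val < k) :
    IsSimplePath (tpSrc k) (tpTgt k) (tpSrc k e) (tpTgt k e) [e] := by
  refine ⟨Walk.cons e rfl (Walk.nil _), ?_⟩
  have hne : tpSrc k e ≠ tpTgt k e := by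
    unfold tpSrc tpTgt
    rw [if_pos he, if_pos he]
    intro h
    have := tpVertTop_inj hk h
    omega
  simpa using hne

lemma flatMap_rep {α γ : Type} (f : α → γ) (b : ℕ) :
    ∀ (l : List α) (j t : ℕ), t < b → ∀ (hj : j < l.length),
      (l.flatMap fun a => List.replicate b (f a))[j * b + t]? = some (f l[j]) := by
  intro l
  induction l with
  | nil => intro j t ht hj; simp at hj
  | cons a l ih =>
    intro j t ht hj
    rw [List.flatMap_cons]
    match j with
    | 0 =>
      simp only [Nat.zero_mul, Nat.zero_add]
      rw [List.getElem?_append_left (by simpa using ht)]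
      simp [List.getElem?_replicate, ht]
    | j + 1 =>
      have harith : (j + 1) * b + t = b + (j * b + t) := by ring
      rw [harith, List.getElem?_append_right (by simp)]
      simp only [List.length_replicate, Nat.add_sub_cancel_left]
      have hj' : j < l.length := by simpa using Nat.lt_of_succ_lt_succ hj
      rw [ih j t ht hj']
      rfl

lemma tpReqs_length (k μ β : ℕ) : (tpReqs k μ β).length = β / μ + β * k := by
  have : List.map (List.length ∘ fun e => List.replicate β
      (⟨tpSrc k e, tpTgt k e, 1⟩ : Req ℕ)) (topPath k) =
      List.replicate (topPath k).length β := by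
    rw [show (List.length ∘ fun e => List.replicate β
        (⟨tpSrc k e, tpTgt k e, 1⟩ : Req ℕ)) = fun _ => β from funext (fun e => by simp)]
    exact List.map_const'
  simp [tpReqs, List.length_flatMap, this, topPath_length, Nat.mul_comm]

lemma tpReqs_get_low {k μ β i : ℕ} (hi : i < β / μ) :
    (tpReqs k μ β)[i]? = some ⟨0, 1, μ⟩ := by
  unfold tpReqs
  rw [List.getElem?_append_left (by simpa using hi)]
  simp [List.getElem?_replicate, hi]

lemma tpReqs_get_high {k μ β : ℕ} (j t : ℕ) (hj : j < k) (ht : t < β) :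
    (tpReqs k μ β)[β / μ + (j * β + t)]? =
      some ⟨tpSrc k ⟨j, by omega⟩, tpTgt k ⟨j, by omega⟩, 1⟩ := by
  unfold tpReqs
  rw [List.getElem?_append_right (by simp)]
  simp only [List.length_replicate, Nat.add_sub_cancel_left]
  rw [flatMap_rep _ β (topPath k) j t ht (by rw [topPath_length]; exact hj)]
  rw [topPath_getElem k j hj]

lemma count_div (β k v : ℕ) (hβ : 0 < β) :
    (∑ m ∈ Finset.range (β * k), if m / β = v then 1 else 0) =
      if v < k then β else 0 := by
  have hfilter : ((Finset.range (β * k)).filter (fun m => m / β = v)) =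
      if v < k then Finset.Ico (v * β) (v * β + β) else ∅ := by
    split_ifs with hv
    · ext m
      simp only [Finset.mem_filter, Finset.mem_range, Finset.mem_Ico]
      constructor
      · rintro ⟨hm, h⟩
        subst h
        have h1 : m / β * β ≤ m := Nat.div_mul_le_self m β
        have h2 : β * (m / β) + m % β = m := Nat.div_add_mod m β
        have h3 : m % β < β := Nat.mod_lt _ hβ
        have h4 : m / β * β = β * (m / β) := Nat.mul_comm _ _
        omega
      · rintro ⟨h1, h2⟩
        have hle : (v + 1) * β ≤ k * β := Nat.mul_le_mul_right β hv
        rw [Nat.add_mul, Nat.one_mul] at hle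
        have hbk : β * k = k * β := Nat.mul_comm _ _
        refine ⟨by omega, ?_⟩
        exact Nat.div_eq_of_lt_le (by omega) (by rw [Nat.add_mul, Nat.one_mul]; omega)
    · ext m
      simp only [Finset.mem_filter, Finset.mem_range, Finset.notMem_empty, iff_false,
        not_and]
      intro hm h
      have : m / β < k := Nat.div_lt_iff_lt_mul hβ |>.mpr (by rw [Nat.mul_comm]; exact hm)
      omega
  calc (∑ m ∈ Finset.range (β * k), if m / β = v then 1 else 0)
      = ((Finset.range (β * k)).filter (fun m => m / β = v)).card := by
        rw [Finset.card_filter]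
    _ = if v < k then β else 0 := by
        rw [hfilter]
        split_ifs <;> simp

/-- The assignment used in the theorem: bottom path for the first `β/μ`
requests, the single edge `(i - β/μ)/β` for the remaining ones. -/
def tpA (k μ β : ℕ) : ℕ → Option (List (Fin (2 * k + 1))) := fun i =>
  if i < β / μ then some (botPath k)
  else if i < β / μ + β * k then
    some [⟨min ((i - β / μ) / β) (2 * k), by omega⟩]
  else none

end Aux

/-- In the two-path instance with parameters `k, μ, β`
(`k, μ, β ≥ 1`, `μ ∣ β`), there exists a feasible assignment serving all
`β/μ + β·k` requests: each request `(s,d,μ)` is routed along the bottom path of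
length `k+1` and each unit request `(u,v,1)` is routed along its single edge,
and no edge carries more than `β` bits in total. -/
theorem two_path_optimal_assignment (k μ β : ℕ) (hk : 1 ≤ k) (hμ : 1 ≤ μ)
    (hβ : 1 ≤ β) (hdvd : μ ∣ β) :
    ∃ A : ℕ → Option (List (Fin (2 * k + 1))),
      (botPath k).length = k + 1 ∧
      -- each of the initial β/μ requests (s,d,μ) is routed along the bottom path
      (∀ i < β / μ, A i = some (botPath k)) ∧
      -- each unit request (u,v,1) is routed along its single edge
      (∀ j : Fin (2 * k + 1), j.val < k → ∀ t < β,
        A (β / μ + j.val * β + t) = some [j]) ∧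
      -- every request is served, via a simple valid path for it
      (∀ i r, (tpReqs k μ β)[i]? = some r →
        ∃ p, A i = some p ∧ IsSimplePath (tpSrc k) (tpTgt k) r.src r.dst p) ∧
      -- feasibility: no edge carries more than β bits in total
      (∀ e : Fin (2 * k + 1),
        UsedBefore (tpReqs k μ β) A (tpReqs k μ β).length e ≤ β) ∧
      -- the assignment serves all β/μ + β·k requests
      Served (tpReqs k μ β) A = β / μ + β * k := by
  have hkβ : β * k = k * β := Nat.mul_comm _ _
  refine ⟨tpA k μ β, botPath_length k, ?_, ?_, ?_, ?_, ?_⟩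
  · -- initial requests go to the bottom path
    intro i hi
    unfold tpA
    rw [if_pos hi]
  · -- unit requests go to their single edge
    intro j hj t ht
    have hlt : j.val * β + t < β * k := by
      have h1 : (j.val + 1) * β ≤ k * β := Nat.mul_le_mul_right β hj
      rw [Nat.add_mul, Nat.one_mul] at h1
      omega
    have hdiv : (j.val * β + t) / β = j.val := by
      refine Nat.div_eq_of_lt_le (by omega) ?_
      rw [Nat.add_mul, Nat.one_mul]; omega
    unfold tpA
    rw [if_neg (by omega), if_pos (by omega)]
    simp only [Option.some.injEq, List.cons.injEq]
    refine ⟨Fin.ext ?_, trivial⟩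
    show min ((β / μ + ↑j * β + t - β / μ) / β) (2 * k) = j.val
    rw [show β / μ + ↑j * β + t - β / μ = ↑j * β + t from by omega, hdiv]
    exact Nat.min_eq_left (by omega)
  · -- every request is served via a simple valid path
    intro i r hr
    have hlen : i < (tpReqs k μ β).length := by
      by_contra h
      rw [List.getElem?_eq_none (by omega)] at hr
      cases hr
    rw [tpReqs_length] at hlen
    by_cases hi : i < β / μ
    · rw [tpReqs_get_low hi] at hr
      injection hr with hr
      subst hr
      refine ⟨botPath k, ?_, botPath_simple k hk⟩
      unfold tpA
      rw [if_pos hi]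
    · push_neg at hi
      set m := i - β / μ with hm
      have hq : m / β < k :=
        (Nat.div_lt_iff_lt_mul hβ).mpr (by omega)
      have hdm : β * (m / β) + m % β = m := Nat.div_add_mod m β
      have hmod : m % β < β := Nat.mod_lt _ hβ
      have hcm : β * (m / β) = (m / β) * β := Nat.mul_comm _ _
      have hi' : i = β / μ + (m / β * β + m % β) := by omega
      rw [hi', tpReqs_get_high (m / β) (m % β) hq hmod] at hr
      injection hr with hr
      subst hr
      refine ⟨[⟨m / β, by omega⟩], ?_, ?_⟩
      · unfold tpA
        rw [if_neg (by omega), if_pos (by omega)]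
        simp only [Option.some.injEq, List.cons.injEq]
        refine ⟨Fin.ext ?_, trivial⟩
        show min ((i - β / μ) / β) (2 * k) = m / β
        rw [← hm]
        exact Nat.min_eq_left (by omega)
      · exact single_simple k hk ⟨m / β, by omega⟩ hq
  · -- feasibility
    intro e
    rw [tpReqs_length]
    unfold UsedBefore
    rw [Finset.range_eq_Ico,
      ← Finset.sum_Ico_consecutive _ (Nat.zero_le (β / μ)) (Nat.le_add_right _ _),
      ← Finset.range_eq_Ico, Finset.sum_Ico_eq_sum_range]
    simp only [Nat.add_sub_cancel_left]
    have hlow : ∀ i ∈ Finset.range (β / μ),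
        (if e ∈ (tpA k μ β i).getD [] then BitsAt (tpReqs k μ β) i else 0) =
          if k ≤ e.val then μ else 0 := by
      intro i hi
      rw [Finset.mem_range] at hi
      unfold tpA
      rw [if_pos hi]
      unfold BitsAt
      rw [tpReqs_get_low hi]
      simp [mem_botPath]
    have hmid : ∀ m ∈ Finset.range (β * k),
        (if e ∈ (tpA k μ β (β / μ + m)).getD []
          then BitsAt (tpReqs k μ β) (β / μ + m) else 0) =
          if m / β = e.val then 1 else 0 := by
      intro m hm
      rw [Finset.mem_range] at hm
      have hq : m / β < k := (Nat.div_lt_iff_lt_mul hβ).mpr (by omega)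
      have hdm : β * (m / β) + m % β = m := Nat.div_add_mod m β
      have hmod : m % β < β := Nat.mod_lt _ hβ
      have hcm : β * (m / β) = (m / β) * β := Nat.mul_comm _ _
      have hA : tpA k μ β (β / μ + m) = some [(⟨m / β, by omega⟩ : Fin (2 * k + 1))] := by
        unfold tpA
        rw [if_neg (by omega), if_pos (by omega)]
        simp only [Option.some.injEq, List.cons.injEq]
        refine ⟨Fin.ext ?_, trivial⟩
        show min ((β / μ + m - β / μ) / β) (2 * k) = m / β
        rw [show β / μ + m - β / μ = m from by omega]
        exact Nat.min_eq_left (by omega)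
      rw [hA]
      unfold BitsAt
      rw [show β / μ + m = β / μ + (m / β * β + m % β) from by omega,
        tpReqs_get_high (m / β) (m % β) hq hmod]
      have hmem : (e ∈ [(⟨m / β, by omega⟩ : Fin (2 * k + 1))]) ↔ m / β = e.val := by
        rw [List.mem_singleton, Fin.ext_iff]
        simp [eq_comm]
      simp only [Option.getD_some]
      rw [if_congr hmem rfl rfl]
      simp
    rw [Finset.sum_congr rfl hlow, Finset.sum_congr rfl hmid,
      Finset.sum_const, Finset.card_range, smul_eq_mul, count_div β k e.val hβ]
    by_cases he : e.val < k
    · rw [if_neg (by omega), if_pos he]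
      simp
    · rw [if_pos (by omega), if_neg he]
      have : β / μ * μ = β := Nat.div_mul_cancel hdvd
      omega
  · -- all requests are served
    unfold Served
    rw [tpReqs_length]
    rw [Finset.filter_true_of_mem ?_, Finset.card_range]
    intro i hi
    rw [Finset.mem_range] at hi
    unfold tpA
    by_cases h1 : i < β / μ
    · rw [if_pos h1]; rfl
    · rw [if_neg h1, if_pos (by omega)]; rfl
end

section
/- In the ring instance with parameters m, μ, β (where m ≥ 1, μ ≥ 1, β ≥ 1 are integers and μ divides β), there exists a feasible assignment serving all β/μ + 2β·m requests: each request (s,d,μ) is routed along the direct edge s→d (totalling exactly β bits on that edge) and each unit request (u,v,1) is routed along its single edge (totalling 2β bits on each long-path edge). -/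
/-- The minimum residual capacity over the edges of the path `p` at step `t`
(`⊤` for the empty path). -/
def MinResidual {V E : Type} [DecidableEq E] (cap : E → ℕ) (reqs : List (Req V))
    (A : ℕ → Option (List E)) (t : ℕ) (p : List E) : WithTop ℕ :=
  (p.map (fun e => cap e - UsedBefore reqs A t e)).minimum

/-- `A` is a greedy widest-available-path run on the request sequence `reqs`:
processing the requests in order, each request `(s,d,n)` is assigned a path
maximizing the minimum residual capacity over its edges, among the simple valid
paths from `s` to `d` all of whose edges have residual capacity at least `n`,
with ties broken in favor of a path of minimum length, and is rejected only if
no such path exists. -/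
def IsGreedyWidestRun {V E : Type} [DecidableEq E] (src tgt : E → V) (cap : E → ℕ)
    (reqs : List (Req V)) (A : ℕ → Option (List E)) : Prop :=
  (∀ i r, reqs[i]? = some r →
      (∀ p, A i = some p →
        IsSimplePath src tgt r.src r.dst p ∧ AvailAt cap reqs A i r.bits p ∧
        (∀ q, IsSimplePath src tgt r.src r.dst q → AvailAt cap reqs A i r.bits q →
          MinResidual cap reqs A i q ≤ MinResidual cap reqs A i p) ∧
        (∀ q, IsSimplePath src tgt r.src r.dst q → AvailAt cap reqs A i r.bits q →
          MinResidual cap reqs A i q = MinResidual cap reqs A i p →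
          p.length ≤ q.length)) ∧
      (A i = none → ∀ q, IsSimplePath src tgt r.src r.dst q →
        ¬ AvailAt cap reqs A i r.bits q)) ∧
  (∀ i, reqs[i]? = none → A i = none)

/-! ### The ring instance
Vertices are natural numbers: `s = 0`, `d = 1`, the internal vertices
`b₁,…,b_{m-1}` of the long path are `2,…,m`.  The edge type is `Fin (m+1)`:
edge `0` is the direct edge `s → d` of capacity `β`, and edges `1,…,m` form the
long path `s → b₁ → ⋯ → b_{m-1} → d` of `m` edges, each of capacity `2β`. -/

/-- The `i`-th vertex of the long path (`i = 0,…,m`). -/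
def ringVert (m i : ℕ) : ℕ := if i = 0 then 0 else if i = m then 1 else i + 1

/-- Source of each edge of the ring instance. -/
def ringSrc (m : ℕ) (e : Fin (m + 1)) : ℕ :=
  if e.val = 0 then 0 else ringVert m (e.val - 1)

/-- Target of each edge of the ring instance. -/
def ringTgt (m : ℕ) (e : Fin (m + 1)) : ℕ :=
  if e.val = 0 then 1 else ringVert m e.val

/-- Capacity of each edge of the ring instance: `β` for the direct edge `s → d`
and `2β` for the edges of the long path. -/
def ringCap (m β : ℕ) (e : Fin (m + 1)) : ℕ := if e.val = 0 then β else 2 * β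

/-- The long path (the `m` edges `1,…,m`, in order). -/
def longPath (m : ℕ) : List (Fin (m + 1)) := (List.finRange (m + 1)).tail

/-- The request sequence of the ring instance: `β/μ` copies of `(s,d,μ)`
followed by, for each edge `(u,v)` of the long path taken in order, `2β` copies
of the unit request `(u,v,1)`. -/
def ringReqs (m μ β : ℕ) : List (Req ℕ) :=
  List.replicate (β / μ) ⟨0, 1, μ⟩ ++
    (longPath m).flatMap (fun e => List.replicate (2 * β) ⟨ringSrc m e, ringTgt m e, 1⟩)

lemma flatMap_replicate_getElem {α γ : Type*} (B : ℕ) (g : α → γ) :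
    ∀ (l : List α) (k : ℕ), k < B * l.length →
      (l.flatMap (fun e => List.replicate B (g e)))[k]? = (l[k / B]?).map g := by
  intro l
  induction l with
  | nil => intro k hk; simp at hk
  | cons a tl ih =>
    intro k hk
    have hB : 0 < B := Nat.pos_of_ne_zero (by rintro rfl; simp at hk)
    rw [List.flatMap_cons]
    by_cases hkB : k < B
    · rw [List.getElem?_append_left (by simpa using hkB), List.getElem?_replicate,
        if_pos hkB, Nat.div_eq_of_lt hkB]
      simp
    · push_neg at hkB
      rw [List.getElem?_append_right (by simpa using hkB), List.length_replicate,
        Nat.div_eq_sub_div hB hkB]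
      have := ih (k - B) (by simp [Nat.mul_succ] at hk; omega)
      simpa using this

lemma longPath_length (m : ℕ) : (longPath m).length = m := by
  simp [longPath]

lemma longPath_getElem (m v : ℕ) (hv : v < m) :
    (longPath m)[v]? = some ⟨v + 1, by omega⟩ := by
  rw [longPath, List.getElem?_tail]
  simp [List.getElem?_eq_getElem, hv]

lemma ringReqs_length (m μ β : ℕ) : (ringReqs m μ β).length = β / μ + 2 * β * m := by
  simp [ringReqs, List.length_flatMap, Function.comp_def, longPath_length, mul_comm]

lemma ringReqs_getElem_lt (m μ β i : ℕ) (hi : i < β / μ) :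
    (ringReqs m μ β)[i]? = some ⟨0, 1, μ⟩ := by
  rw [ringReqs, List.getElem?_append_left (by simpa using hi), List.getElem?_replicate,
    if_pos hi]

lemma ringReqs_getElem_ge (m μ β k : ℕ) (hk : k < 2 * β * m) :
    (ringReqs m μ β)[β / μ + k]? =
      ((longPath m)[k / (2 * β)]?).map (fun e => ⟨ringSrc m e, ringTgt m e, 1⟩) := by
  rw [ringReqs, List.getElem?_append_right (by simp)]
  simp only [List.length_replicate, Nat.add_sub_cancel_left]
  exact flatMap_replicate_getElem _ _ _ _ (by rw [longPath_length]; exact hk)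

lemma ringVert_ne (m v : ℕ) (hv : v < m) : ringVert m v ≠ ringVert m (v + 1) := by
  unfold ringVert; split_ifs <;> first | contradiction | omega

lemma ringSrc_ne_ringTgt (m : ℕ) (e : Fin (m + 1)) : ringSrc m e ≠ ringTgt m e := by
  rcases Nat.eq_zero_or_pos e.val with h | h
  · simp [ringSrc, ringTgt, h]
  · have he : e.val ≠ 0 := by omega
    have hv : e.val - 1 < m := by omega
    have := ringVert_ne m (e.val - 1) hv
    rw [Nat.sub_add_cancel h] at this
    simpa [ringSrc, ringTgt, he] using this

lemma singleton_simple (m : ℕ) (e : Fin (m + 1)) :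
    IsSimplePath (ringSrc m) (ringTgt m) (ringSrc m e) (ringTgt m e) [e] := by
  refine ⟨Walk.cons e rfl (Walk.nil _), ?_⟩
  simp [ringSrc_ne_ringTgt m e]

/-- The explicit assignment for the ring instance. -/
def ringA (m μ β : ℕ) : ℕ → Option (List (Fin (m + 1))) := fun i =>
  if i < β / μ then some [0]
  else if i < β / μ + 2 * β * m then
    some [⟨((i - β / μ) / (2 * β) % m + 1) % (m + 1), Nat.mod_lt _ (Nat.succ_pos m)⟩]
  else none


/-- In the ring instance with parameters `m, μ, β`
(`m, μ, β ≥ 1`, `μ ∣ β`), there exists a feasible assignment serving all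
`β/μ + 2β·m` requests: each request `(s,d,μ)` is routed along the direct edge
`s → d` (totalling exactly `β` bits on that edge) and each unit request
`(u,v,1)` is routed along its single edge (totalling `2β` bits on each
long-path edge). -/
theorem ring_optimal_assignment (m μ β : ℕ) (hm : 1 ≤ m) (hμ : 1 ≤ μ)
    (hβ : 1 ≤ β) (hdvd : μ ∣ β) :
    ∃ A : ℕ → Option (List (Fin (m + 1))),
      -- each of the initial β/μ requests (s,d,μ) is routed along the direct edge
      (∀ i < β / μ, A i = some [(0 : Fin (m + 1))]) ∧
      -- each unit request (u,v,1) is routed along its single edge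
      (∀ j : Fin (m + 1), 1 ≤ j.val → ∀ t < 2 * β,
        A (β / μ + (j.val - 1) * (2 * β) + t) = some [j]) ∧
      -- every request is served, via a simple valid path for it
      (∀ i r, (ringReqs m μ β)[i]? = some r →
        ∃ p, A i = some p ∧ IsSimplePath (ringSrc m) (ringTgt m) r.src r.dst p) ∧
      -- the direct edge carries exactly β bits in total
      UsedBefore (ringReqs m μ β) A (ringReqs m μ β).length (0 : Fin (m + 1)) = β ∧
      -- each long-path edge carries exactly 2β bits in total
      (∀ j : Fin (m + 1), 1 ≤ j.val →
        UsedBefore (ringReqs m μ β) A (ringReqs m μ β).length j = 2 * β) ∧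
      -- feasibility: no edge carries more bits than its capacity
      (∀ e, UsedBefore (ringReqs m μ β) A (ringReqs m μ β).length e ≤ ringCap m β e) ∧
      -- the assignment serves all β/μ + 2β·m requests
      Served (ringReqs m μ β) A = β / μ + 2 * β * m := by
  classical
  have hB : 0 < 2 * β := by omega
  -- routing of the first β/μ requests
  have hA1 : ∀ i < β / μ, ringA m μ β i = some [(0 : Fin (m + 1))] := by
    intro i hi; simp [ringA, hi]
  -- routing of the later requests
  have hAget : ∀ k < 2 * β * m, ∃ jk : Fin (m + 1), jk.val = k / (2 * β) + 1 ∧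
      ringA m μ β (β / μ + k) = some [jk] ∧
      (ringReqs m μ β)[β / μ + k]? = some ⟨ringSrc m jk, ringTgt m jk, 1⟩ := by
    intro k hk
    have hdiv : k / (2 * β) < m := (Nat.div_lt_iff_lt_mul hB).mpr (by rw [mul_comm]; exact hk)
    have hmod : k / (2 * β) % m = k / (2 * β) := Nat.mod_eq_of_lt hdiv
    have hlt1 : k / (2 * β) % m + 1 < m + 1 := by omega
    have hmod2 : (k / (2 * β) % m + 1) % (m + 1) = k / (2 * β) + 1 := by
      rw [Nat.mod_eq_of_lt hlt1, hmod]
    refine ⟨⟨(k / (2 * β) % m + 1) % (m + 1), Nat.mod_lt _ (Nat.succ_pos m)⟩, hmod2, ?_, ?_⟩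
    · have h1 : ¬ (β / μ + k < β / μ) := by omega
      have h2 : β / μ + k < β / μ + 2 * β * m := by omega
      simp only [ringA, if_neg h1, if_pos h2, Nat.add_sub_cancel_left]
    · rw [ringReqs_getElem_ge m μ β k hk, longPath_getElem m _ hdiv]
      have hfe : (⟨k / (2 * β) + 1, by omega⟩ : Fin (m + 1)) =
          ⟨(k / (2 * β) % m + 1) % (m + 1), Nat.mod_lt _ (Nat.succ_pos m)⟩ :=
        Fin.ext (by simp [hmod2])
      rw [← hfe]
      rfl
  have hA2 : ∀ j : Fin (m + 1), 1 ≤ j.val → ∀ t < 2 * β,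
      ringA m μ β (β / μ + (j.val - 1) * (2 * β) + t) = some [j] := by
    intro j hj t ht
    have hjm : j.val ≤ m := by omega
    have hk : (j.val - 1) * (2 * β) + t < 2 * β * m := by
      have h1 : (j.val - 1 + 1) * (2 * β) ≤ m * (2 * β) := Nat.mul_le_mul_right _ (by omega)
      have e1 : (j.val - 1 + 1) * (2 * β) = (j.val - 1) * (2 * β) + 2 * β := by ring
      have e2 : m * (2 * β) = 2 * β * m := by ring
      omega
    obtain ⟨jk, hval, hA, -⟩ := hAget _ hk
    have hdv : ((j.val - 1) * (2 * β) + t) / (2 * β) = j.val - 1 := by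
      rw [mul_comm (j.val - 1), Nat.mul_add_div hB, Nat.div_eq_of_lt ht, add_zero]
    have hjj : jk = j := Fin.ext (by rw [hval, hdv]; omega)
    rw [← add_assoc] at hA
    rwa [hjj] at hA
  -- every request is served via a simple path
  have hC3 : ∀ i r, (ringReqs m μ β)[i]? = some r →
      ∃ p, ringA m μ β i = some p ∧ IsSimplePath (ringSrc m) (ringTgt m) r.src r.dst p := by
    intro i r hr
    have hi : i < (ringReqs m μ β).length := by
      by_contra h
      push_neg at h
      rw [List.getElem?_eq_none h] at hr
      cases hr
    rw [ringReqs_length] at hi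
    by_cases hiq : i < β / μ
    · rw [ringReqs_getElem_lt m μ β i hiq] at hr
      obtain rfl : r = ⟨0, 1, μ⟩ := (Option.some_inj.mp hr).symm
      refine ⟨[0], hA1 i hiq, ?_⟩
      have hs : ringSrc m (0 : Fin (m + 1)) = 0 := by simp [ringSrc]
      have ht' : ringTgt m (0 : Fin (m + 1)) = 1 := by simp [ringTgt]
      have hsp := singleton_simple m 0
      rw [hs, ht'] at hsp
      exact hsp
    · push_neg at hiq
      obtain ⟨jk, hval, hA, hreq⟩ := hAget (i - β / μ) (by omega)
      rw [show β / μ + (i - β / μ) = i by omega] at hA hreq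
      rw [hreq] at hr
      obtain rfl : r = ⟨ringSrc m jk, ringTgt m jk, 1⟩ := (Option.some_inj.mp hr).symm
      exact ⟨[jk], hA, singleton_simple m jk⟩
  -- direct edge carries exactly β bits
  have hC4 : UsedBefore (ringReqs m μ β) (ringA m μ β) (ringReqs m μ β).length
      (0 : Fin (m + 1)) = β := by
    have key : UsedBefore (ringReqs m μ β) (ringA m μ β) (ringReqs m μ β).length
        (0 : Fin (m + 1)) =
        ∑ i ∈ Finset.range (β / μ + 2 * β * m),
          if i ∈ Finset.range (β / μ) then μ else 0 := by
      simp only [UsedBefore]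
      rw [ringReqs_length]
      refine Finset.sum_congr rfl fun i hi => ?_
      rw [Finset.mem_range] at hi
      by_cases hiq : i < β / μ
      · rw [hA1 i hiq]
        have hb : BitsAt (ringReqs m μ β) i = μ := by
          simp [BitsAt, ringReqs_getElem_lt m μ β i hiq]
        simp [hb, hiq]
      · push_neg at hiq
        obtain ⟨jk, hval, hA, -⟩ := hAget (i - β / μ) (by omega)
        rw [show β / μ + (i - β / μ) = i by omega] at hA
        rw [hA]
        have h0 : ¬ ((0 : Fin (m + 1)) = jk) := by
          intro h
          have h' := congrArg Fin.val h
          simp [hval] at h'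
        simp [h0, Finset.mem_range, Nat.not_lt.mpr hiq]
    rw [key, Finset.sum_ite_mem,
      Finset.inter_eq_right.mpr (Finset.range_subset_range.mpr (by omega)),
      Finset.sum_const, Finset.card_range, smul_eq_mul, Nat.div_mul_cancel hdvd]
  -- each long-path edge carries exactly 2β bits
  have hC5 : ∀ j : Fin (m + 1), 1 ≤ j.val →
      UsedBefore (ringReqs m μ β) (ringA m μ β) (ringReqs m μ β).length j = 2 * β := by
    intro j hj
    have hjm : j.val ≤ m := by omega
    have hub : (j.val - 1) * (2 * β) + 2 * β ≤ 2 * β * m := by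
      have h1 : (j.val - 1 + 1) * (2 * β) ≤ m * (2 * β) := Nat.mul_le_mul_right _ (by omega)
      have e1 : (j.val - 1 + 1) * (2 * β) = (j.val - 1) * (2 * β) + 2 * β := by ring
      have e2 : m * (2 * β) = 2 * β * m := by ring
      omega
    have key : UsedBefore (ringReqs m μ β) (ringA m μ β) (ringReqs m μ β).length j =
        ∑ i ∈ Finset.range (β / μ + 2 * β * m),
          if i ∈ Finset.Ico (β / μ + (j.val - 1) * (2 * β))
              (β / μ + (j.val - 1) * (2 * β) + 2 * β) then 1 else 0 := by
      simp only [UsedBefore]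
      rw [ringReqs_length]
      refine Finset.sum_congr rfl fun i hi => ?_
      rw [Finset.mem_range] at hi
      by_cases hiq : i < β / μ
      · have hj0 : ¬ (j = (0 : Fin (m + 1))) := by
          intro h; rw [h] at hj; simp at hj
        have hmem : i ∉ Finset.Ico (β / μ + (j.val - 1) * (2 * β))
            (β / μ + (j.val - 1) * (2 * β) + 2 * β) := by
          rw [Finset.mem_Ico]; omega
        rw [hA1 i hiq]
        simp [hj0, hmem]
      · push_neg at hiq
        obtain ⟨jk, hval, hA, hreq⟩ := hAget (i - β / μ) (by omega)
        rw [show β / μ + (i - β / μ) = i by omega] at hA hreq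
        rw [hA]
        have hb : BitsAt (ringReqs m μ β) i = 1 := by simp [BitsAt, hreq]
        have hiffdiv : (i - β / μ) / (2 * β) = j.val - 1 ↔
            ((j.val - 1) * (2 * β) ≤ i - β / μ ∧
              i - β / μ < (j.val - 1) * (2 * β) + 2 * β) := by
          have e1 : (j.val - 1 + 1) * (2 * β) = (j.val - 1) * (2 * β) + 2 * β := by ring
          constructor
          · intro h
            refine ⟨(Nat.le_div_iff_mul_le hB).mp h.ge, ?_⟩
            have h2 : (i - β / μ) / (2 * β) < j.val - 1 + 1 := by omega
            have h3 := (Nat.div_lt_iff_lt_mul hB).mp h2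
            omega
          · rintro ⟨h1, h2⟩
            have h1' := (Nat.le_div_iff_mul_le hB).mpr h1
            have h2' := (Nat.div_lt_iff_lt_mul hB).mpr
              (show i - β / μ < (j.val - 1 + 1) * (2 * β) by omega)
            omega
        by_cases hcase : j = jk
        · subst hcase
          have hd : (i - β / μ) / (2 * β) = j.val - 1 := by omega
          have hmem : i ∈ Finset.Ico (β / μ + (j.val - 1) * (2 * β))
              (β / μ + (j.val - 1) * (2 * β) + 2 * β) := by
            rw [Finset.mem_Ico]
            have := hiffdiv.mp hd
            omega
          rw [Finset.mem_Ico] at hmem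
          simp [hmem, hb]
        · have hmem : i ∉ Finset.Ico (β / μ + (j.val - 1) * (2 * β))
              (β / μ + (j.val - 1) * (2 * β) + 2 * β) := by
            rw [Finset.mem_Ico]
            intro hmm
            have hd := hiffdiv.mpr ⟨by omega, by omega⟩
            exact hcase (Fin.ext (by omega))
          simp [hcase, hmem]
    rw [key, Finset.sum_ite_mem,
      Finset.inter_eq_right.mpr ?_, Finset.sum_const, Nat.card_Ico, smul_eq_mul, mul_one]
    · omega
    · intro x hx
      rw [Finset.mem_Ico] at hx
      rw [Finset.mem_range]
      omega
  -- feasibility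
  have hC6 : ∀ e, UsedBefore (ringReqs m μ β) (ringA m μ β) (ringReqs m μ β).length e ≤
      ringCap m β e := by
    intro e
    by_cases he : e.val = 0
    · have he0 : e = 0 := Fin.ext (by simp [he])
      rw [he0, hC4]
      simp [ringCap]
    · have h1 : 1 ≤ e.val := by omega
      rw [hC5 e h1]
      simp [ringCap, he]
  -- all requests served
  have hC7 : Served (ringReqs m μ β) (ringA m μ β) = β / μ + 2 * β * m := by
    simp only [Served]
    rw [Finset.filter_true_of_mem, Finset.card_range, ringReqs_length]
    intro i hi
    rw [Finset.mem_range, ringReqs_length] at hi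
    by_cases hiq : i < β / μ
    · rw [hA1 i hiq]; rfl
    · push_neg at hiq
      obtain ⟨jk, hval, hA, -⟩ := hAget (i - β / μ) (by omega)
      rw [show β / μ + (i - β / μ) = i by omega] at hA
      rw [hA]; rfl
  exact ⟨ringA m μ β, hA1, hA2, hC3, hC4, hC5, hC6, hC7⟩
end
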